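/- Assume the block-Lipschitz assumption holds with matrices Q^1,…,Q^m and constant L. For any x, y ∈ ℝ^d and j ∈ {1,…,m}, let w_j ∈ ℝ^d be the vector whose first j blocks agree with x and whose remaining blocks agree with y, i.e., w_j = (x^(1),…,x^(j), y^(j+1),…,y^(m)). Then Σ_{j=1}^m ‖x − w_j‖²_{Q^j} ≤ ‖y − x‖²_{Q̃} ≤ (L²/2)‖y − x‖². -/

import Mathlib

noncomputable section
open MeasureTheory Finset Set RealInnerProductSpace

abbrev Euc (d : ℕ) := EuclideanSpace ℝ (Fin d)

def blockMask {d m : ℕ} (blk : Fin d → Fin m) (j : Fin m) (z : Euc d) : Euc d :=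
  (EuclideanSpace.equiv (Fin d) ℝ).symm fun i => if blk i = j then z i else 0

def blockCombine {d m : ℕ} (blk : Fin d → Fin m) (j : ℕ) (x y : Euc d) : Euc d :=
  (EuclideanSpace.equiv (Fin d) ℝ).symm fun i => if (blk i : ℕ) + 1 ≤ j then x i else y i

def quadForm {d : ℕ} (Q : Matrix (Fin d) (Fin d) ℝ) (z : Euc d) : ℝ :=
  ∑ i, ∑ i', Q i i' * z i * z i'

def keepGE {d m : ℕ} (blk : Fin d → Fin m) (j : ℕ) (Q : Matrix (Fin d) (Fin d) ℝ) :
    Matrix (Fin d) (Fin d) ℝ :=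
  Matrix.of fun i i' => if j ≤ (blk i : ℕ) + 1 ∧ j ≤ (blk i' : ℕ) + 1 then Q i i' else 0

def Qtilde {d m : ℕ} (blk : Fin d → Fin m) (Q : Fin m → Matrix (Fin d) (Fin d) ℝ) :
    Matrix (Fin d) (Fin d) ℝ :=
  ∑ j : Fin m, (keepGE blk ((j : ℕ) + 1) (Q j) + keepGE blk ((j : ℕ) + 2) (Q j))

def specNorm {d : ℕ} (Q : Matrix (Fin d) (Fin d) ℝ) : ℝ :=
  ‖Matrix.toEuclideanCLM (𝕜 := ℝ) Q‖

def bigL {d m : ℕ} (blk : Fin d → Fin m) (Q : Fin m → Matrix (Fin d) (Fin d) ℝ) : ℝ :=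
  Real.sqrt (2 * specNorm (Qtilde blk Q))

def BlockLip {d m : ℕ} (blk : Fin d → Fin m) (f : Euc d → ℝ)
    (Q : Fin m → Matrix (Fin d) (Fin d) ℝ) : Prop :=
  ∀ (j : Fin m) (x y : Euc d),
    ‖blockMask blk j (gradient f x) - blockMask blk j (gradient f y)‖ ^ 2 ≤
      quadForm (Q j) (x - y)

def SubgradStrongConvex {d : ℕ} (γ : ℝ) (g : Euc d → ℝ) : Prop :=
  ∀ x y s : Euc d, (∀ z, g x + ⟪s, z - x⟫ ≤ g z) →
    g x + ⟪s, y - x⟫ + γ / 2 * ‖y - x‖ ^ 2 ≤ g y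

/-! Zeroing the rows and columns of `Q` outside a coordinate set `S` gives the quadratic form
`z ↦ ‖z|_S‖²_Q`. Since `x - w_j` is the restriction of `x - y` to the blocks after `j`, the `j`-th
summand on the left is exactly the `(Q^j)_{≥j+1}` part of `‖y - x‖²_{Q̃}`; the remaining
`(Q^j)_{≥j}` parts are nonnegative because `Q^j` is positive semidefinite. The second inequality is
Cauchy–Schwarz together with the operator-norm bound. -/

section QuadForm

variable {d : ℕ}

def restrictTo (p : Fin d → Prop) [DecidablePred p] (z : Euc d) : Euc d :=
  (EuclideanSpace.equiv (Fin d) ℝ).symm fun i => if p i then z i else 0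

lemma restrictTo_apply (p : Fin d → Prop) [DecidablePred p] (z : Euc d) (i : Fin d) :
    restrictTo p z i = if p i then z i else 0 := rfl

lemma quadForm_eq_dotProduct_mulVec (Q : Matrix (Fin d) (Fin d) ℝ) (z : Euc d) :
    quadForm Q z = dotProduct z.ofLp (Q.mulVec z.ofLp) := by
  simp only [quadForm, dotProduct, Matrix.mulVec, Finset.mul_sum]
  exact Finset.sum_congr rfl fun _ _ => Finset.sum_congr rfl fun _ _ => by ring

lemma quadForm_neg (Q : Matrix (Fin d) (Fin d) ℝ) (z : Euc d) :
    quadForm Q (-z) = quadForm Q z := by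
  simp only [quadForm, PiLp.neg_apply, mul_neg, neg_mul, neg_neg]

lemma quadForm_add (A B : Matrix (Fin d) (Fin d) ℝ) (z : Euc d) :
    quadForm (A + B) z = quadForm A z + quadForm B z := by
  simp only [quadForm, Matrix.add_apply, add_mul, Finset.sum_add_distrib]

lemma quadForm_sum {ι : Type*} (s : Finset ι) (M : ι → Matrix (Fin d) (Fin d) ℝ)
    (z : Euc d) : quadForm (∑ j ∈ s, M j) z = ∑ j ∈ s, quadForm (M j) z := by
  simp only [quadForm, Matrix.sum_apply, Finset.sum_mul]
  exact (Finset.sum_congr rfl fun _ _ => Finset.sum_comm).trans Finset.sum_comm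

lemma quadForm_nonneg {Q : Matrix (Fin d) (Fin d) ℝ} (hQ : Q.PosSemidef) (z : Euc d) :
    0 ≤ quadForm Q z := by
  rw [quadForm_eq_dotProduct_mulVec]
  exact hQ.dotProduct_mulVec_nonneg z.ofLp

lemma quadForm_eq_inner_toEuclideanCLM (Q : Matrix (Fin d) (Fin d) ℝ) (z : Euc d) :
    quadForm Q z = ⟪z, Matrix.toEuclideanCLM (𝕜 := ℝ) Q z⟫ := by
  rw [quadForm_eq_dotProduct_mulVec, EuclideanSpace.inner_eq_star_dotProduct,
    Matrix.ofLp_toEuclideanCLM, dotProduct_comm]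
  rfl

lemma quadForm_le_specNorm_mul (Q : Matrix (Fin d) (Fin d) ℝ) (z : Euc d) :
    quadForm Q z ≤ specNorm Q * ‖z‖ ^ 2 := by
  set A := Matrix.toEuclideanCLM (𝕜 := ℝ) Q
  calc quadForm Q z = ⟪z, A z⟫ := quadForm_eq_inner_toEuclideanCLM Q z
    _ ≤ ‖z‖ * ‖A z‖ := real_inner_le_norm _ _
    _ ≤ ‖z‖ * (‖A‖ * ‖z‖) := mul_le_mul_of_nonneg_left (A.le_opNorm z) (norm_nonneg z)
    _ = specNorm Q * ‖z‖ ^ 2 := by rw [specNorm]; ring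

lemma quadForm_of_ite_and (p : Fin d → Prop) [DecidablePred p]
    (Q : Matrix (Fin d) (Fin d) ℝ) (z : Euc d) :
    quadForm (Matrix.of fun i i' => if p i ∧ p i' then Q i i' else 0) z =
      quadForm Q (restrictTo p z) := by
  simp only [quadForm, restrictTo, Matrix.of_apply]
  refine Finset.sum_congr rfl fun i _ => Finset.sum_congr rfl fun i' _ => ?_
  by_cases hi : p i <;> by_cases hi' : p i' <;> simp [hi, hi']

end QuadForm

section Blocks

variable {d m : ℕ} (blk : Fin d → Fin m)

lemma blockCombine_apply (j : ℕ) (x y : Euc d) (i : Fin d) :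
    blockCombine blk j x y i = if (blk i : ℕ) + 1 ≤ j then x i else y i := rfl

lemma quadForm_keepGE (k : ℕ) (Q : Matrix (Fin d) (Fin d) ℝ) (z : Euc d) :
    quadForm (keepGE blk k Q) z = quadForm Q (restrictTo (fun i => k ≤ (blk i : ℕ) + 1) z) :=
  quadForm_of_ite_and _ Q z

lemma quadForm_keepGE_nonneg (k : ℕ) {Q : Matrix (Fin d) (Fin d) ℝ} (hQ : Q.PosSemidef)
    (z : Euc d) : 0 ≤ quadForm (keepGE blk k Q) z := by
  rw [quadForm_keepGE]
  exact quadForm_nonneg hQ _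

lemma sub_blockCombine (j : ℕ) (x y : Euc d) :
    x - blockCombine blk (j + 1) x y =
      restrictTo (fun i => j + 2 ≤ (blk i : ℕ) + 1) (x - y) := by
  ext i
  rw [restrictTo_apply, PiLp.sub_apply, PiLp.sub_apply, blockCombine_apply]
  split_ifs <;> first | omega | ring

lemma quadForm_sub_blockCombine (j : ℕ) (Q : Matrix (Fin d) (Fin d) ℝ) (x y : Euc d) :
    quadForm Q (x - blockCombine blk (j + 1) x y) = quadForm (keepGE blk (j + 2) Q) (y - x) := by
  rw [sub_blockCombine, ← quadForm_keepGE, ← neg_sub, quadForm_neg]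

lemma quadForm_Qtilde (Q : Fin m → Matrix (Fin d) (Fin d) ℝ) (z : Euc d) :
    quadForm (Qtilde blk Q) z = ∑ j : Fin m,
      (quadForm (keepGE blk ((j : ℕ) + 1) (Q j)) z +
        quadForm (keepGE blk ((j : ℕ) + 2) (Q j)) z) := by
  rw [Qtilde, quadForm_sum]
  exact Finset.sum_congr rfl fun j _ => quadForm_add _ _ _

lemma bigL_sq_div_two (Q : Fin m → Matrix (Fin d) (Fin d) ℝ) :
    bigL blk Q ^ 2 / 2 = specNorm (Qtilde blk Q) := by
  have : 0 ≤ specNorm (Qtilde blk Q) := norm_nonneg _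
  rw [bigL, Real.sq_sqrt (by positivity)]
  ring

end Blocks

theorem stmt4_general {d m : ℕ} (blk : Fin d → Fin m)
    (Q : Fin m → Matrix (Fin d) (Fin d) ℝ) (hpsd : ∀ j, (Q j).PosSemidef) :
    ∀ x y : Euc d,
      (∑ j : Fin m, quadForm (Q j) (x - blockCombine blk ((j : ℕ) + 1) x y) ≤
        quadForm (Qtilde blk Q) (y - x)) ∧
      quadForm (Qtilde blk Q) (y - x) ≤ bigL blk Q ^ 2 / 2 * ‖y - x‖ ^ 2 := by
  intro x y
  refine ⟨?_, ?_⟩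
  · rw [quadForm_Qtilde]
    refine Finset.sum_le_sum fun j _ => ?_
    rw [quadForm_sub_blockCombine]
    exact le_add_of_nonneg_left (quadForm_keepGE_nonneg blk _ (hpsd j) _)
  · rw [bigL_sq_div_two]
    exact quadForm_le_specNorm_mul _ _

theorem stmt4 {d m : ℕ} (blk : Fin d → Fin m) (hmono : Monotone blk)
    (hsurj : Function.Surjective blk)
    (Q : Fin m → Matrix (Fin d) (Fin d) ℝ) (hpsd : ∀ j, (Q j).PosSemidef) :
    ∀ x y : Euc d,
      (∑ j : Fin m, quadForm (Q j) (x - blockCombine blk ((j : ℕ) + 1) x y) ≤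
        quadForm (Qtilde blk Q) (y - x)) ∧
      quadForm (Qtilde blk Q) (y - x) ≤ bigL blk Q ^ 2 / 2 * ‖y - x‖ ^ 2 :=
  stmt4_general blk Q hpsd
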